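/- Let K = conv{A, B, C} ⊂ ℝ² be a nondegenerate triangle whose interior angle at A is greater than or equal to its interior angles at B and at C (A is a maximum-angle vertex). Let x_K be the orthogonal projection of A onto the line through B and C, let v₁ = (C − B)/‖C − B‖, and let v₂ be a unit vector orthogonal to v₁. Let u : ℝ² → ℝ be twice continuously differentiable with ‖D²u(x)‖ ≤ M (operator norm of the Hessian) for all x ∈ K, and let v_h : ℝ² → ℝ be an affine function satisfying ⟨∇v_h, v₂⟩ = ⟨∇u(x_K), v₂⟩, v_h(B) = u(B), v_h(C) = u(C). Then |u(A) − v_h(A)| ≤ (‖x_K − B‖ · ‖x_K − C‖ + ‖x_K − A‖²) · M. -/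

import Mathlib

open scoped RealInnerProductSpace

abbrev E2 := EuclideanSpace ℝ (Fin 2)

/-!
Since `A` carries the largest angle, the angles at `B` and `C` are acute, so the foot of the
altitude is `x_K = (1 - t) B + t C` with `t ∈ [0, 1]` and lies in `K`. In the plane `A - x_K` is
parallel to `v₂`, so `v_h` and the first-order Taylor polynomial `T` of `u` at `x_K` have the
same derivative along `A - x_K`. The affine map `v_h - T` is therefore constant along `A - x_K`,
and its value at `x_K` is the `(1 - t, t)`-average of its values at `B` and `C`. With `R = u - T`
this reads `u(A) - v_h(A) = R(A) - (1 - t) R(B) - t R(C)`. Bounding `|R(y)| ≤ M ‖y - x_K‖²` and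
using `(1 - t) ‖x_K - B‖² + t ‖x_K - C‖² = ‖x_K - B‖ ‖x_K - C‖` gives the estimate.
-/

open Set Real EuclideanGeometry

noncomputable def firstOrderRemainder {E F : Type*} [NormedAddCommGroup E] [NormedSpace ℝ E]
    [NormedAddCommGroup F] [NormedSpace ℝ F] (f : E → F) (x y : E) : F :=
  f y - f x - fderiv ℝ f x (y - x)

theorem Convex.norm_firstOrderRemainder_le {E F : Type*} [NormedAddCommGroup E]
    [NormedSpace ℝ E] [NormedAddCommGroup F] [NormedSpace ℝ F] {f : E → F} {s : Set E}
    (hs : Convex ℝ s) (hf : ∀ x ∈ s, DifferentiableAt ℝ f x)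
    (hf' : ∀ x ∈ s, DifferentiableAt ℝ (fderiv ℝ f) x) {M : ℝ}
    (hM : ∀ x ∈ s, ‖fderiv ℝ (fderiv ℝ f) x‖ ≤ M) {x y : E} (hx : x ∈ s) (hy : y ∈ s) :
    ‖firstOrderRemainder f x y‖ ≤ M * ‖y - x‖ ^ 2 := by
  have hseg : segment ℝ x y ⊆ s := hs.segment_subset hx hy
  have hM₀ : 0 ≤ M := (norm_nonneg (fderiv ℝ (fderiv ℝ f) x)).trans (hM x hx)
  have hlip : ∀ z ∈ segment ℝ x y, ‖fderiv ℝ f z - fderiv ℝ f x‖ ≤ M * ‖y - x‖ := fun z hz =>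
    calc ‖fderiv ℝ f z - fderiv ℝ f x‖ ≤ M * ‖z - x‖ :=
          hs.norm_image_sub_le_of_norm_fderiv_le hf' hM hx (hseg hz)
      _ ≤ M * ‖y - x‖ := by gcongr; exact norm_sub_le_of_mem_segment hz
  calc ‖firstOrderRemainder f x y‖ ≤ M * ‖y - x‖ * ‖y - x‖ :=
        (convex_segment x y).norm_image_sub_le_of_norm_fderiv_le' (fun z hz => hf z (hseg hz))
          hlip (left_mem_segment ℝ x y) (right_mem_segment ℝ x y)
    _ = M * ‖y - x‖ ^ 2 := by ring

theorem EuclideanGeometry.angle_lt_pi_div_two_of_angle_le {V P : Type*} [NormedAddCommGroup V]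
    [InnerProductSpace ℝ V] [MetricSpace P] [NormedAddTorsor V P] {A B C : P}
    (h : ¬Collinear ℝ ({A, B, C} : Set P)) (hle : ∠ A B C ≤ ∠ B A C) : ∠ A B C < π / 2 := by
  have hsum := angle_add_angle_add_angle_eq_pi C (ne₁₂_of_not_collinear h).symm
  have hC : 0 < ∠ B C A :=
    angle_pos_of_not_collinear (by rwa [Set.insert_comm, Set.pair_comm] at h)
  rw [angle_comm C A B] at hsum
  linarith

theorem abs_sub_convex_combination_le {a b c t : ℝ} (ht : t ∈ Icc (0 : ℝ) 1) :
    |a - ((1 - t) * b + t * c)| ≤ |a| + ((1 - t) * |b| + t * |c|) := by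
  grw [abs_sub, abs_add_le, abs_mul, abs_mul, abs_of_nonneg (sub_nonneg.mpr ht.2),
    abs_of_nonneg ht.1]

section InnerProductSpace

variable {V : Type*} [NormedAddCommGroup V] [InnerProductSpace ℝ V]

theorem InnerProductGeometry.inner_nonneg_of_angle_le_pi_div_two {x y : V}
    (h : angle x y ≤ π / 2) : 0 ≤ ⟪x, y⟫ := by
  rw [← cos_angle_mul_norm_mul_norm]
  have hcos : 0 ≤ cos (angle x y) :=
    cos_nonneg_of_mem_Icc ⟨by linarith [angle_nonneg x y, pi_pos], h⟩
  positivity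

theorem mem_Icc_of_inner_nonneg {A B C x : V} {t : ℝ} (hBC : B ≠ C)
    (hx : x = B + t • (C - B)) (hperp : ⟪A - x, C - B⟫ = 0)
    (hB : 0 ≤ ⟪A - B, C - B⟫) (hC : 0 ≤ ⟪A - C, B - C⟫) : t ∈ Icc (0 : ℝ) 1 := by
  have hL : 0 < ‖C - B‖ ^ 2 := by
    have : C - B ≠ 0 := sub_ne_zero.mpr hBC.symm
    positivity
  have hAB : ⟪A - B, C - B⟫ = t * ‖C - B‖ ^ 2 := by
    rw [show A - B = (A - x) + t • (C - B) by rw [hx]; abel, inner_add_left, hperp,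
      real_inner_smul_left, real_inner_self_eq_norm_sq, zero_add]
  have hAC : ⟪A - C, B - C⟫ = (1 - t) * ‖C - B‖ ^ 2 := by
    rw [show A - C = (A - x) - (1 - t) • (C - B) by rw [hx]; module,
      show B - C = -(C - B) by abel, inner_neg_right, inner_sub_left, hperp,
      real_inner_smul_left, real_inner_self_eq_norm_sq]
    ring
  rw [hAB] at hB
  rw [hAC] at hC
  exact ⟨nonneg_of_mul_nonneg_left hB hL, by nlinarith⟩

theorem mem_Icc_of_angle_le_angle {A B C x : V} {t : ℝ} (h : ¬Collinear ℝ ({A, B, C} : Set V))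
    (hB : ∠ A B C ≤ ∠ B A C) (hC : ∠ A C B ≤ ∠ B A C) (hx : x = B + t • (C - B))
    (hperp : ⟪A - x, C - B⟫ = 0) : t ∈ Icc (0 : ℝ) 1 :=
  mem_Icc_of_inner_nonneg (ne₂₃_of_not_collinear h) hx hperp
    (InnerProductGeometry.inner_nonneg_of_angle_le_pi_div_two
      (angle_lt_pi_div_two_of_angle_le h hB).le)
    (InnerProductGeometry.inner_nonneg_of_angle_le_pi_div_two
      (angle_lt_pi_div_two_of_angle_le (by rwa [Set.pair_comm])
        (hC.trans_eq (angle_comm B A C))).le)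

theorem mem_span_singleton_of_inner_eq_zero_of_finrank_eq_two (hV : Module.finrank ℝ V = 2)
    {v w x : V} (hv : v ≠ 0) (hw : w ≠ 0) (hvw : ⟪v, w⟫ = 0) (hxw : ⟪x, w⟫ = 0) :
    x ∈ ℝ ∙ v := by
  have : FiniteDimensional ℝ V := Module.finite_of_finrank_eq_succ hV
  have hW : Module.finrank ℝ (ℝ ∙ w)ᗮ = 1 := by
    have := (ℝ ∙ w).finrank_add_finrank_orthogonal
    rw [finrank_span_singleton hw, hV] at this
    omega
  have mem_W {y : V} (hy : ⟪y, w⟫ = 0) : y ∈ (ℝ ∙ w)ᗮ :=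
    Submodule.mem_orthogonal_singleton_iff_inner_left.mpr hy
  obtain ⟨c, hc⟩ := (finrank_eq_one_iff_of_nonzero' (⟨v, mem_W hvw⟩ : (ℝ ∙ w)ᗮ)
    (by simpa using hv)).mp hW ⟨x, mem_W hxw⟩
  exact Submodule.mem_span_singleton.mpr ⟨c, congrArg Subtype.val hc⟩

theorem affine_interpolation_error_eq (u : V → ℝ) {A B C x g : V} {c t : ℝ}
    (hx : x = B + t • (C - B)) (hA : fderiv ℝ u x (A - x) = ⟪g, A - x⟫)
    (hB : ⟪g, B⟫ + c = u B) (hC : ⟪g, C⟫ + c = u C) :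
    u A - (⟪g, A⟫ + c) = firstOrderRemainder u x A
      - ((1 - t) * firstOrderRemainder u x B + t * firstOrderRemainder u x C) := by
  have hlin : (1 - t) • (B - x) + t • (C - x) = 0 := by rw [hx]; module
  have hD := congrArg (fderiv ℝ u x) hlin
  have hg := congrArg (⟪g, ·⟫) hlin
  simp only [map_add, map_smul, map_zero, smul_eq_mul, inner_add_right, real_inner_smul_right,
    inner_sub_right, inner_zero_right] at hD hg
  rw [inner_sub_right] at hA
  simp only [firstOrderRemainder, hA]
  linear_combination hg - hD - (1 - t) * hB - t * hC

theorem one_sub_mul_norm_sq_add_mul_norm_sq {B C x : V} {t : ℝ} (hx : x = B + t • (C - B))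
    (ht : t ∈ Icc (0 : ℝ) 1) :
    (1 - t) * ‖x - B‖ ^ 2 + t * ‖x - C‖ ^ 2 = ‖x - B‖ * ‖x - C‖ := by
  have hB : ‖x - B‖ = t * ‖C - B‖ := by
    rw [hx, add_sub_cancel_left, norm_smul, Real.norm_of_nonneg ht.1]
  have hC : ‖x - C‖ = (1 - t) * ‖C - B‖ := by
    rw [show x - C = (1 - t) • (B - C) by rw [hx]; module, norm_smul,
      Real.norm_of_nonneg (sub_nonneg.mpr ht.2), norm_sub_rev]
  rw [hB, hC]
  ring

end InnerProductSpace
/-- Lemma 3.3, vertex estimate (3.6): the modified Lagrange interpolant `v_h` (affine,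
with gradient `g` and constant `c`) of a `C²` function `u` on a triangle
`K = conv{A,B,C}` with maximum-angle vertex `A` satisfies
`|u(A) − v_h(A)| ≤ (‖x_K − B‖·‖x_K − C‖ + ‖x_K − A‖²) M`, where `M` bounds the operator
norm of the Hessian of `u` on `K` and `x_K` is the foot of the altitude from `A`. -/
theorem stmt_9 (A B C xK v₂ g : E2) (c M : ℝ)
    (hind : AffineIndependent ℝ ![A, B, C])
    (hmaxB : EuclideanGeometry.angle A B C ≤ EuclideanGeometry.angle B A C)
    (hmaxC : EuclideanGeometry.angle A C B ≤ EuclideanGeometry.angle B A C)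
    (hxK_mem : ∃ t : ℝ, xK = B + t • (C - B))
    (hxK_perp : ⟪A - xK, C - B⟫ = 0)
    (hv₂_unit : ‖v₂‖ = 1)
    (hv₂_perp : ⟪v₂, C - B⟫ = 0)
    (u : E2 → ℝ) (hu : ContDiff ℝ 2 u)
    (hM : ∀ x ∈ convexHull ℝ ({A, B, C} : Set E2), ‖fderiv ℝ (fderiv ℝ u) x‖ ≤ M)
    (hgrad : ⟪g, v₂⟫ = ⟪gradient u xK, v₂⟫)
    (hB : ⟪g, B⟫ + c = u B)
    (hC : ⟪g, C⟫ + c = u C) :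
    |u A - (⟪g, A⟫ + c)| ≤ (‖xK - B‖ * ‖xK - C‖ + ‖xK - A‖ ^ 2) * M := by
  have hNC : ¬Collinear ℝ ({A, B, C} : Set E2) := affineIndependent_iff_not_collinear_set.mp hind
  obtain ⟨t, hxK⟩ := hxK_mem
  have ht : t ∈ Icc (0 : ℝ) 1 := mem_Icc_of_angle_le_angle hNC hmaxB hmaxC hxK hxK_perp
  have ht₀ : 0 ≤ t := ht.1
  have ht₁ : 0 ≤ 1 - t := sub_nonneg.mpr ht.2
  have hdir : fderiv ℝ u xK (A - xK) = ⟪g, A - xK⟫ := by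
    obtain ⟨s, hs⟩ := Submodule.mem_span_singleton.mp
      (mem_span_singleton_of_inner_eq_zero_of_finrank_eq_two finrank_euclideanSpace_fin
        (norm_ne_zero_iff.mp (hv₂_unit ▸ one_ne_zero))
        (sub_ne_zero.mpr (ne₂₃_of_not_collinear hNC).symm) hv₂_perp hxK_perp)
    rw [← hs, map_smul, real_inner_smul_right, ← inner_gradient_left, ← hgrad, smul_eq_mul]
  have hxK_mem : xK ∈ convexHull ℝ ({A, B, C} : Set E2) :=
    segment_subset_convexHull (x := B) (y := C) (by simp) (by simp)
      ⟨1 - t, t, ht₁, ht₀, by ring, by rw [hxK]; module⟩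
  have hR {y} (hy : y ∈ ({A, B, C} : Set E2)) :
      |firstOrderRemainder u xK y| ≤ M * ‖y - xK‖ ^ 2 :=
    (convex_convexHull ℝ _).norm_firstOrderRemainder_le
      (fun x _ => hu.differentiable two_ne_zero x)
      (fun x _ => (hu.fderiv_right (m := 1) le_rfl).differentiable one_ne_zero x) hM hxK_mem
      (subset_convexHull ℝ _ hy)
  rw [affine_interpolation_error_eq u hxK hdir hB hC,
    ← one_sub_mul_norm_sq_add_mul_norm_sq hxK ht, norm_sub_rev xK, norm_sub_rev xK,
    norm_sub_rev xK]
  calc _ ≤ _ := abs_sub_convex_combination_le ht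
    _ ≤ M * ‖A - xK‖ ^ 2 + ((1 - t) * (M * ‖B - xK‖ ^ 2) + t * (M * ‖C - xK‖ ^ 2)) := by
        gcongr ?_ + (_ * ?_ + _ * ?_) <;> exact hR (by simp)
    _ = _ := by ring
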